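/- arXiv:1609.01643 — 3 statements merged into one kernel-verified Lean document; each statement's English description precedes it below -/
import Mathlib

section
/- Let p = 7k + 4 be a prime. Then the binomial coefficient C(5k+2, k) is congruent to C(6k+3, 2k+1) modulo p. -/
open Finset

private lemma fact_add (n : ℕ) : ∀ m : ℕ,
    (n + m).factorial = n.factorial * ∏ i ∈ Finset.range m, (n + 1 + i) := by
  intro m
  induction m with
  | zero => simp
  | succ m ih =>
    rw [Finset.prod_range_succ, ← mul_assoc, ← ih]
    rw [show n + (m + 1) = (n + m) + 1 from by ring, Nat.factorial_succ]
    ring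

theorem stmt_2 (k p : ℕ) (hp : p.Prime) (hpk : p = 7 * k + 4) :
    ((Nat.choose (5 * k + 2) k : ℕ) : ZMod p)
      = ((Nat.choose (6 * k + 3) (2 * k + 1) : ℕ) : ZMod p) := by
  haveI : Fact p.Prime := ⟨hp⟩
  -- k is odd
  have hkodd : Odd k := by
    rcases Nat.even_or_odd k with he | ho
    · exfalso
      have h2 : 2 ∣ p := by
        obtain ⟨m, hm⟩ := he
        exact ⟨7 * m + 2, by omega⟩
      have := (Nat.Prime.eq_one_or_self_of_dvd hp 2 h2)
      omega
    · exact ho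
  -- factorials below p are nonzero in ZMod p
  have hfactne : ∀ n : ℕ, n < p → ((n.factorial : ℕ) : ZMod p) ≠ 0 := by
    intro n hn h
    have hdvd : p ∣ n.factorial := (ZMod.natCast_eq_zero_iff _ _).mp h
    exact absurd ((Nat.Prime.dvd_factorial hp).mp hdvd) (by omega)
  set F : ZMod p := ((k.factorial : ℕ) : ZMod p) * ((2*k+1).factorial : ZMod p)
      * ((4*k+2).factorial : ZMod p) with hF
  have hFne : F ≠ 0 := by
    apply mul_ne_zero
    apply mul_ne_zero
    · exact hfactne k (by omega)
    · exact hfactne (2*k+1) (by omega)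
    · exact hfactne (4*k+2) (by omega)
  -- key product identity
  have hprod : (∏ i ∈ Finset.range (k+1), ((5*k+3+i : ℕ) : ZMod p))
      = ∏ i ∈ Finset.range (k+1), ((k+1+i : ℕ) : ZMod p) := by
    rw [← Finset.prod_range_reflect (fun i => ((5*k+3+i : ℕ) : ZMod p)) (k+1)]
    have hterm : ∀ i ∈ Finset.range (k+1),
        ((5*k+3+(k+1-1-i) : ℕ) : ZMod p) = -(((k+1+i : ℕ) : ZMod p)) := by
      intro i hi
      rw [Finset.mem_range] at hi
      have hsum : (5*k+3+(k+1-1-i)) + (k+1+i) = p := by omega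
      have : ((5*k+3+(k+1-1-i) : ℕ) : ZMod p) + ((k+1+i : ℕ) : ZMod p) = 0 := by
        rw [← Nat.cast_add, hsum, ZMod.natCast_self]
      linear_combination this
    rw [Finset.prod_congr rfl hterm]
    have : ∀ i ∈ Finset.range (k+1), -(((k+1+i : ℕ) : ZMod p))
        = (-1) * ((k+1+i : ℕ) : ZMod p) := by intro i _; ring
    rw [Finset.prod_congr rfl this, Finset.prod_mul_distrib, Finset.prod_const]
    have : (-1 : ZMod p) ^ (k+1) = 1 := by
      obtain ⟨m, hm⟩ := hkodd
      rw [hm, show 2*m+1+1 = 2*(m+1) from by ring, pow_mul]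
      simp
    rw [Finset.card_range, this, one_mul]
  -- key factorial identity mod p
  have hkey : (((5*k+2).factorial : ℕ) : ZMod p) * ((2*k+1).factorial : ZMod p)
      = (((6*k+3).factorial : ℕ) : ZMod p) * ((k.factorial : ℕ) : ZMod p) := by
    have h1 : (6*k+3).factorial = (5*k+2).factorial * ∏ i ∈ Finset.range (k+1), (5*k+3+i) := by
      have := fact_add (5*k+2) (k+1)
      rw [show 5*k+2+(k+1) = 6*k+3 from by ring] at this
      simpa [show ∀ i, 5*k+2+1+i = 5*k+3+i from fun i => by ring] using this
    have h2 : (2*k+1).factorial = k.factorial * ∏ i ∈ Finset.range (k+1), (k+1+i) := by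
      have := fact_add k (k+1)
      rw [show k+(k+1) = 2*k+1 from by ring] at this
      simpa [show ∀ i, k+1+i = k+1+i from fun i => rfl] using this
    push_cast at hprod
    rw [h1, h2]
    push_cast
    rw [hprod]
    ring
  -- reduce binomials to factorials
  have hc1 : ((Nat.choose (5*k+2) k : ℕ) : ZMod p) * F
      = (((5*k+2).factorial : ℕ) : ZMod p) * ((2*k+1).factorial : ZMod p) := by
    have := Nat.choose_mul_factorial_mul_factorial (show k ≤ 5*k+2 from by omega)
    rw [show 5*k+2-k = 4*k+2 from by omega] at this
    rw [hF]
    calc ((Nat.choose (5*k+2) k : ℕ) : ZMod p) *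
          (((k.factorial : ℕ) : ZMod p) * ((2*k+1).factorial : ZMod p)
            * ((4*k+2).factorial : ZMod p))
        = (((Nat.choose (5*k+2) k * k.factorial * (4*k+2).factorial : ℕ)) : ZMod p)
            * ((2*k+1).factorial : ZMod p) := by push_cast; ring
      _ = _ := by rw [this]
  have hc2 : ((Nat.choose (6*k+3) (2*k+1) : ℕ) : ZMod p) * F
      = (((6*k+3).factorial : ℕ) : ZMod p) * ((k.factorial : ℕ) : ZMod p) := by
    have := Nat.choose_mul_factorial_mul_factorial (show 2*k+1 ≤ 6*k+3 from by omega)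
    rw [show 6*k+3-(2*k+1) = 4*k+2 from by omega] at this
    rw [hF]
    calc ((Nat.choose (6*k+3) (2*k+1) : ℕ) : ZMod p) *
          (((k.factorial : ℕ) : ZMod p) * ((2*k+1).factorial : ZMod p)
            * ((4*k+2).factorial : ZMod p))
        = (((Nat.choose (6*k+3) (2*k+1) * (2*k+1).factorial * (4*k+2).factorial : ℕ)) : ZMod p)
            * ((k.factorial : ℕ) : ZMod p) := by push_cast; ring
      _ = _ := by rw [this]
  have := hc1.trans (hkey.trans hc2.symm)
  exact mul_right_cancel₀ hFne this
end

section
/- Let p = 7k + 4 be a prime. Then the binomial coefficient C(5k+2, k) is congruent to -C(3k+1, k) modulo p. -/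
set_option maxRecDepth 20000
open Finset

lemma fact_prod_aux (a b : ℕ) :
    (a + b).factorial = a.factorial * ∏ i ∈ Finset.range b, (a + 1 + i) := by
  induction b with
  | zero => simp
  | succ n ih =>
    rw [Finset.prod_range_succ, ← mul_assoc, ← ih, ← Nat.add_assoc, Nat.factorial_succ]
    ring

theorem stmt_3 (k p : ℕ) (hp : p.Prime) (hpk : p = 7 * k + 4) :
    ((Nat.choose (5 * k + 2) k : ℕ) : ZMod p)
      = -((Nat.choose (3 * k + 1) k : ℕ) : ZMod p) := by
  haveI : Fact p.Prime := ⟨hp⟩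
  -- k is odd
  have hkodd : Odd k := by
    rcases Nat.even_or_odd k with he | ho
    · exfalso
      obtain ⟨m, hm⟩ := he
      have h2 : (2 : ℕ) ∣ p := ⟨7 * m + 2, by omega⟩
      rcases (hp.eq_one_or_self_of_dvd 2 h2) with h | h <;> omega
    · exact ho
  -- factorial identities
  have h1 : Nat.choose (5 * k + 2) k * k.factorial * (4 * k + 2).factorial
      = (5 * k + 2).factorial := by
    have := Nat.choose_mul_factorial_mul_factorial (show k ≤ 5 * k + 2 by omega)
    have hs : 5 * k + 2 - k = 4 * k + 2 := by omega
    rwa [hs] at this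
  have h2 : Nat.choose (3 * k + 1) k * k.factorial * (2 * k + 1).factorial
      = (3 * k + 1).factorial := by
    have := Nat.choose_mul_factorial_mul_factorial (show k ≤ 3 * k + 1 by omega)
    have hs : 3 * k + 1 - k = 2 * k + 1 := by omega
    rwa [hs] at this
  have hf1 : (5 * k + 2).factorial
      = (4 * k + 2).factorial * ∏ i ∈ Finset.range k, (4 * k + 3 + i) := by
    have := fact_prod_aux (4 * k + 2) k
    have hs : 4 * k + 2 + k = 5 * k + 2 := by omega
    rw [hs, show (∏ i ∈ Finset.range k, (4 * k + 2 + 1 + i))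
      = ∏ i ∈ Finset.range k, (4 * k + 3 + i) from
      Finset.prod_congr rfl fun i _ => by omega] at this
    exact this
  have hf2 : (3 * k + 1).factorial
      = (2 * k + 1).factorial * ∏ i ∈ Finset.range k, (2 * k + 2 + i) := by
    have := fact_prod_aux (2 * k + 1) k
    have hs : 2 * k + 1 + k = 3 * k + 1 := by omega
    rw [hs, show (∏ i ∈ Finset.range k, (2 * k + 1 + 1 + i))
      = ∏ i ∈ Finset.range k, (2 * k + 2 + i) from
      Finset.prod_congr rfl fun i _ => by omega] at this
    exact this
  -- the product congruence in ZMod p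
  have hprod : ((∏ i ∈ Finset.range k, (4 * k + 3 + i) : ℕ) : ZMod p)
      = - ((∏ i ∈ Finset.range k, (2 * k + 2 + i) : ℕ) : ZMod p) := by
    rw [Nat.cast_prod, Nat.cast_prod]
    have hstep : ∀ i ∈ Finset.range k, ((4 * k + 3 + i : ℕ) : ZMod p)
        = - ((2 * k + 2 + (k - 1 - i) : ℕ) : ZMod p) := by
      intro i hi
      rw [Finset.mem_range] at hi
      have hsum : (4 * k + 3 + i) + (2 * k + 2 + (k - 1 - i)) = p := by omega
      have : ((4 * k + 3 + i : ℕ) : ZMod p) + ((2 * k + 2 + (k - 1 - i) : ℕ) : ZMod p) = 0 := by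
        rw [← Nat.cast_add, hsum, ZMod.natCast_self]
      linear_combination this
    calc (∏ i ∈ Finset.range k, ((4 * k + 3 + i : ℕ) : ZMod p))
        = ∏ i ∈ Finset.range k, (- ((2 * k + 2 + (k - 1 - i) : ℕ) : ZMod p)) :=
          Finset.prod_congr rfl hstep
      _ = ∏ i ∈ Finset.range k, ((-1 : ZMod p) * ((2 * k + 2 + (k - 1 - i) : ℕ) : ZMod p)) :=
          Finset.prod_congr rfl fun i _ => (neg_one_mul _).symm
      _ = (-1) ^ k * ∏ i ∈ Finset.range k, ((2 * k + 2 + (k - 1 - i) : ℕ) : ZMod p) := by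
          rw [Finset.prod_mul_distrib, Finset.prod_const, Finset.card_range]
      _ = - ∏ i ∈ Finset.range k, ((2 * k + 2 + i : ℕ) : ZMod p) := by
          rw [hkodd.neg_one_pow,
            Finset.prod_range_reflect (fun i => ((2 * k + 2 + i : ℕ) : ZMod p)) k]
          ring
  -- units
  have hu : ((k.factorial * (4 * k + 2).factorial * (2 * k + 1).factorial : ℕ) : ZMod p) ≠ 0 := by
    rw [Ne, ZMod.natCast_eq_zero_iff]
    intro hd
    rcases (Nat.Prime.prime hp).2.2 _ _ hd with hd | hd
    · rcases (Nat.Prime.prime hp).2.2 _ _ hd with hd | hd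
      · exact absurd ((Nat.Prime.dvd_factorial hp).mp hd) (by omega)
      · exact absurd ((Nat.Prime.dvd_factorial hp).mp hd) (by omega)
    · exact absurd ((Nat.Prime.dvd_factorial hp).mp hd) (by omega)
  -- main computation
  apply mul_right_cancel₀ hu
  push_cast at hu ⊢
  have e1 : ((Nat.choose (5 * k + 2) k : ℕ) : ZMod p) * (k.factorial : ZMod p)
      * ((4 * k + 2).factorial : ZMod p) = ((5 * k + 2).factorial : ZMod p) := by
    rw [← Nat.cast_mul, ← Nat.cast_mul, h1]
  have e2 : ((Nat.choose (3 * k + 1) k : ℕ) : ZMod p) * (k.factorial : ZMod p)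
      * ((2 * k + 1).factorial : ZMod p) = ((3 * k + 1).factorial : ZMod p) := by
    rw [← Nat.cast_mul, ← Nat.cast_mul, h2]
  have e3 : ((5 * k + 2).factorial : ZMod p) = ((4 * k + 2).factorial : ZMod p)
      * ((∏ i ∈ Finset.range k, (4 * k + 3 + i) : ℕ) : ZMod p) := by
    rw [← Nat.cast_mul, hf1]
  have e4 : ((3 * k + 1).factorial : ZMod p) = ((2 * k + 1).factorial : ZMod p)
      * ((∏ i ∈ Finset.range k, (2 * k + 2 + i) : ℕ) : ZMod p) := by
    rw [← Nat.cast_mul, hf2]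
  calc ((Nat.choose (5 * k + 2) k : ℕ) : ZMod p)
        * ((k.factorial : ZMod p) * ((4 * k + 2).factorial : ZMod p)
          * ((2 * k + 1).factorial : ZMod p))
      = ((5 * k + 2).factorial : ZMod p) * ((2 * k + 1).factorial : ZMod p) := by
        rw [← e1]; ring
    _ = ((4 * k + 2).factorial : ZMod p) * ((2 * k + 1).factorial : ZMod p)
        * ((∏ i ∈ Finset.range k, (4 * k + 3 + i) : ℕ) : ZMod p) := by rw [e3]; ring
    _ = - (((4 * k + 2).factorial : ZMod p) * ((3 * k + 1).factorial : ZMod p)) := by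
        rw [hprod, e4]; ring
    _ = -((Nat.choose (3 * k + 1) k : ℕ) : ZMod p)
        * ((k.factorial : ZMod p) * ((4 * k + 2).factorial : ZMod p)
          * ((2 * k + 1).factorial : ZMod p)) := by rw [← e2]; ring
end

section
/- Let p ≡ 4 (mod 7) be a prime and k = (p-4)/7. In the field F_p(t) of rational functions, for any polynomials a, b, c ∈ F_p[t], not all zero, with deg b > deg c and deg b ≥ deg a, the expression t^{(2k+1)p + 3k+2} b^{p²+p+1} has degree strictly larger than all other five terms of Δ′ = a^{p²+p+1} - t^{(3k+2)p} a b^p c^{p²} - t^{3k+2} a^{p²} b c^p + t^{(3k+2)p + k+1} c^{p²+p+1} + t^{(2k+1)p + 3k+2} b^{p²+p+1} - t^{(2k+1)p + k+1} a^p b^{p²} c; hence Δ′ ≠ 0. -/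
set_option maxHeartbeats 2000000 in
open Polynomial in
theorem stmt_19 (p : ℕ) (hp : p.Prime) (hp7 : p % 7 = 4)
    (a b c : (ZMod p)[X]) (hb : b ≠ 0)
    (hbc : c.degree < b.degree) (hba : a.degree ≤ b.degree) :
    (∀ k : ℕ, k = (p - 4) / 7 →
      ((a ^ (p ^ 2 + p + 1)).degree
          < (X ^ ((2 * k + 1) * p + 3 * k + 2) * b ^ (p ^ 2 + p + 1)).degree ∧
       (X ^ ((3 * k + 2) * p) * (a * b ^ p * c ^ (p ^ 2))).degree
          < (X ^ ((2 * k + 1) * p + 3 * k + 2) * b ^ (p ^ 2 + p + 1)).degree ∧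
       (X ^ (3 * k + 2) * (a ^ (p ^ 2) * b * c ^ p)).degree
          < (X ^ ((2 * k + 1) * p + 3 * k + 2) * b ^ (p ^ 2 + p + 1)).degree ∧
       (X ^ ((3 * k + 2) * p + k + 1) * c ^ (p ^ 2 + p + 1)).degree
          < (X ^ ((2 * k + 1) * p + 3 * k + 2) * b ^ (p ^ 2 + p + 1)).degree ∧
       (X ^ ((2 * k + 1) * p + k + 1) * (a ^ p * b ^ (p ^ 2) * c)).degree
          < (X ^ ((2 * k + 1) * p + 3 * k + 2) * b ^ (p ^ 2 + p + 1)).degree) ∧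
      a ^ (p ^ 2 + p + 1)
        - X ^ ((3 * k + 2) * p) * (a * b ^ p * c ^ (p ^ 2))
        - X ^ (3 * k + 2) * (a ^ (p ^ 2) * b * c ^ p)
        + X ^ ((3 * k + 2) * p + k + 1) * c ^ (p ^ 2 + p + 1)
        + X ^ ((2 * k + 1) * p + 3 * k + 2) * b ^ (p ^ 2 + p + 1)
        - X ^ ((2 * k + 1) * p + k + 1) * (a ^ p * b ^ (p ^ 2) * c) ≠ 0) := by
  intro k hk
  haveI := Fact.mk hp
  have hp2 : 2 ≤ p := hp.two_le
  have hpk : p = 7 * k + 4 := by omega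
  have hp0 : p ≠ 0 := by omega
  set nb := b.natDegree with hnbdef
  have hbdeg : b.degree = (nb : WithBot ℕ) := degree_eq_natDegree hb
  have hda : a.degree ≤ (nb : WithBot ℕ) := hbdeg ▸ hba
  have hdc : c.degree < (nb : WithBot ℕ) := hbdeg ▸ hbc
  have hdc' : c.degree ≤ ((nb - 1 : ℕ) : WithBot ℕ) := by
    cases hcd : c.degree with
    | bot => exact bot_le
    | coe m =>
      rw [hcd] at hdc
      rw [Nat.cast_withBot] at hdc ⊢
      exact WithBot.coe_le_coe.mpr (Nat.le_sub_one_of_lt (WithBot.coe_lt_coe.mp hdc))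
  have hM0 : (X : (ZMod p)[X]) ^ ((2 * k + 1) * p + 3 * k + 2) * b ^ (p ^ 2 + p + 1) ≠ 0 :=
    mul_ne_zero (pow_ne_zero _ X_ne_zero) (pow_ne_zero _ hb)
  have hMdeg : ((X : (ZMod p)[X]) ^ ((2 * k + 1) * p + 3 * k + 2) * b ^ (p ^ 2 + p + 1)).degree
      = (((2 * k + 1) * p + 3 * k + 2 + (p ^ 2 + p + 1) * nb : ℕ) : WithBot ℕ) := by
    rw [degree_mul, degree_X_pow, degree_pow, hbdeg]
    push_cast
    ring
  have h1 : (a ^ (p ^ 2 + p + 1)).degree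
      < ((X : (ZMod p)[X]) ^ ((2 * k + 1) * p + 3 * k + 2) * b ^ (p ^ 2 + p + 1)).degree := by
    rw [hMdeg]
    calc (a ^ (p ^ 2 + p + 1)).degree ≤ (p ^ 2 + p + 1) • ((nb : ℕ) : WithBot ℕ) := by
          rw [degree_pow]; gcongr
      _ = (((p ^ 2 + p + 1) * nb : ℕ) : WithBot ℕ) := by push_cast; ring
      _ < _ := by
          exact_mod_cast Nat.lt_add_left_iff_pos.mpr
            (by exact Nat.lt_of_lt_of_le (by omega) (Nat.le_add_left _ _))
  have h2 : ((X : (ZMod p)[X]) ^ ((3 * k + 2) * p) * (a * b ^ p * c ^ (p ^ 2))).degree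
      < ((X : (ZMod p)[X]) ^ ((2 * k + 1) * p + 3 * k + 2) * b ^ (p ^ 2 + p + 1)).degree := by
    rw [hMdeg]
    rcases Nat.eq_zero_or_pos nb with h0 | h0
    · have hc0 : c = 0 := degree_eq_bot.mp (Nat.WithBot.lt_zero_iff.mp (by
        rw [h0] at hdc; exact_mod_cast hdc))
      rw [hc0, zero_pow (pow_ne_zero 2 hp0), mul_zero, mul_zero, degree_zero]
      exact WithBot.bot_lt_coe _
    · obtain ⟨m, hm⟩ : ∃ m, nb = m + 1 := ⟨nb - 1, by omega⟩
      calc ((X : (ZMod p)[X]) ^ ((3 * k + 2) * p) * (a * b ^ p * c ^ (p ^ 2))).degree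
          ≤ (((3 * k + 2) * p : ℕ) : WithBot ℕ) + (((nb : ℕ) : WithBot ℕ)
              + p • ((nb : ℕ) : WithBot ℕ) + p ^ 2 • ((nb - 1 : ℕ) : WithBot ℕ)) := by
            rw [degree_mul, degree_mul, degree_mul, degree_X_pow, degree_pow, degree_pow, hbdeg]
            gcongr
        _ = (((3 * k + 2) * p + (nb + p * nb + p ^ 2 * (nb - 1)) : ℕ) : WithBot ℕ) := by
            push_cast; ring
        _ < _ := by
            rw [Nat.cast_lt, hm, hpk]
            simp only [Nat.add_sub_cancel]
            nlinarith [sq_nonneg k, sq_nonneg m]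
  have h3 : ((X : (ZMod p)[X]) ^ (3 * k + 2) * (a ^ (p ^ 2) * b * c ^ p)).degree
      < ((X : (ZMod p)[X]) ^ ((2 * k + 1) * p + 3 * k + 2) * b ^ (p ^ 2 + p + 1)).degree := by
    rw [hMdeg]
    rcases Nat.eq_zero_or_pos nb with h0 | h0
    · have hc0 : c = 0 := degree_eq_bot.mp (Nat.WithBot.lt_zero_iff.mp (by
        rw [h0] at hdc; exact_mod_cast hdc))
      rw [hc0, zero_pow hp0, mul_zero, mul_zero, degree_zero]
      exact WithBot.bot_lt_coe _
    · obtain ⟨m, hm⟩ : ∃ m, nb = m + 1 := ⟨nb - 1, by omega⟩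
      calc ((X : (ZMod p)[X]) ^ (3 * k + 2) * (a ^ (p ^ 2) * b * c ^ p)).degree
          ≤ (((3 * k + 2) : ℕ) : WithBot ℕ) + (p ^ 2 • ((nb : ℕ) : WithBot ℕ)
              + ((nb : ℕ) : WithBot ℕ) + p • ((nb - 1 : ℕ) : WithBot ℕ)) := by
            rw [degree_mul, degree_mul, degree_mul, degree_X_pow, degree_pow, degree_pow, hbdeg]
            gcongr
        _ = (((3 * k + 2) + (p ^ 2 * nb + nb + p * (nb - 1)) : ℕ) : WithBot ℕ) := by
            push_cast; ring
        _ < _ := by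
            rw [Nat.cast_lt, hm, hpk]
            simp only [Nat.add_sub_cancel]
            nlinarith [sq_nonneg k, sq_nonneg m]
  have h4 : ((X : (ZMod p)[X]) ^ ((3 * k + 2) * p + k + 1) * c ^ (p ^ 2 + p + 1)).degree
      < ((X : (ZMod p)[X]) ^ ((2 * k + 1) * p + 3 * k + 2) * b ^ (p ^ 2 + p + 1)).degree := by
    rw [hMdeg]
    rcases Nat.eq_zero_or_pos nb with h0 | h0
    · have hc0 : c = 0 := degree_eq_bot.mp (Nat.WithBot.lt_zero_iff.mp (by
        rw [h0] at hdc; exact_mod_cast hdc))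
      rw [hc0, zero_pow (by positivity), mul_zero, degree_zero]
      exact WithBot.bot_lt_coe _
    · obtain ⟨m, hm⟩ : ∃ m, nb = m + 1 := ⟨nb - 1, by omega⟩
      calc ((X : (ZMod p)[X]) ^ ((3 * k + 2) * p + k + 1) * c ^ (p ^ 2 + p + 1)).degree
          ≤ (((3 * k + 2) * p + k + 1 : ℕ) : WithBot ℕ)
              + (p ^ 2 + p + 1) • ((nb - 1 : ℕ) : WithBot ℕ) := by
            rw [degree_mul, degree_X_pow, degree_pow]
            gcongr
        _ = (((3 * k + 2) * p + k + 1 + (p ^ 2 + p + 1) * (nb - 1) : ℕ) : WithBot ℕ) := by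
            push_cast; ring
        _ < _ := by
            rw [Nat.cast_lt, hm, hpk]
            simp only [Nat.add_sub_cancel]
            nlinarith [sq_nonneg k, sq_nonneg m]
  have h6 : ((X : (ZMod p)[X]) ^ ((2 * k + 1) * p + k + 1) * (a ^ p * b ^ (p ^ 2) * c)).degree
      < ((X : (ZMod p)[X]) ^ ((2 * k + 1) * p + 3 * k + 2) * b ^ (p ^ 2 + p + 1)).degree := by
    rw [hMdeg]
    rcases Nat.eq_zero_or_pos nb with h0 | h0
    · have hc0 : c = 0 := degree_eq_bot.mp (Nat.WithBot.lt_zero_iff.mp (by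
        rw [h0] at hdc; exact_mod_cast hdc))
      rw [hc0, mul_zero, mul_zero, degree_zero]
      exact WithBot.bot_lt_coe _
    · obtain ⟨m, hm⟩ : ∃ m, nb = m + 1 := ⟨nb - 1, by omega⟩
      calc ((X : (ZMod p)[X]) ^ ((2 * k + 1) * p + k + 1) * (a ^ p * b ^ (p ^ 2) * c)).degree
          ≤ (((2 * k + 1) * p + k + 1 : ℕ) : WithBot ℕ) + (p • ((nb : ℕ) : WithBot ℕ)
              + p ^ 2 • ((nb : ℕ) : WithBot ℕ) + ((nb - 1 : ℕ) : WithBot ℕ)) := by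
            rw [degree_mul, degree_mul, degree_mul, degree_X_pow, degree_pow, degree_pow, hbdeg]
            gcongr
        _ = (((2 * k + 1) * p + k + 1 + (p * nb + p ^ 2 * nb + (nb - 1)) : ℕ) : WithBot ℕ) := by
            push_cast; ring
        _ < _ := by
            rw [Nat.cast_lt, hm, hpk]
            simp only [Nat.add_sub_cancel]
            nlinarith [sq_nonneg k, sq_nonneg m]
  refine ⟨⟨h1, h2, h3, h4, h6⟩, ?_⟩
  have hQ : (a ^ (p ^ 2 + p + 1)
      - X ^ ((3 * k + 2) * p) * (a * b ^ p * c ^ (p ^ 2))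
      - X ^ (3 * k + 2) * (a ^ (p ^ 2) * b * c ^ p)
      + X ^ ((3 * k + 2) * p + k + 1) * c ^ (p ^ 2 + p + 1)).degree
      < ((X : (ZMod p)[X]) ^ ((2 * k + 1) * p + 3 * k + 2) * b ^ (p ^ 2 + p + 1)).degree :=
    (degree_add_le _ _).trans_lt (max_lt ((degree_sub_le _ _).trans_lt
      (max_lt ((degree_sub_le _ _).trans_lt (max_lt h1 h2)) h3)) h4)
  have hQM : (a ^ (p ^ 2 + p + 1)
      - X ^ ((3 * k + 2) * p) * (a * b ^ p * c ^ (p ^ 2))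
      - X ^ (3 * k + 2) * (a ^ (p ^ 2) * b * c ^ p)
      + X ^ ((3 * k + 2) * p + k + 1) * c ^ (p ^ 2 + p + 1)
      + X ^ ((2 * k + 1) * p + 3 * k + 2) * b ^ (p ^ 2 + p + 1)).degree
      = ((X : (ZMod p)[X]) ^ ((2 * k + 1) * p + 3 * k + 2) * b ^ (p ^ 2 + p + 1)).degree :=
    degree_add_eq_right_of_degree_lt hQ
  intro hE
  have hEdeg : (a ^ (p ^ 2 + p + 1)
      - X ^ ((3 * k + 2) * p) * (a * b ^ p * c ^ (p ^ 2))
      - X ^ (3 * k + 2) * (a ^ (p ^ 2) * b * c ^ p)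
      + X ^ ((3 * k + 2) * p + k + 1) * c ^ (p ^ 2 + p + 1)
      + X ^ ((2 * k + 1) * p + 3 * k + 2) * b ^ (p ^ 2 + p + 1)
      - X ^ ((2 * k + 1) * p + k + 1) * (a ^ p * b ^ (p ^ 2) * c)).degree
      = ((X : (ZMod p)[X]) ^ ((2 * k + 1) * p + 3 * k + 2) * b ^ (p ^ 2 + p + 1)).degree := by
    rw [degree_sub_eq_left_of_degree_lt (hQM ▸ h6)]
    exact hQM
  rw [hE, degree_zero, hMdeg] at hEdeg
  exact (WithBot.bot_ne_coe) hEdeg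
end
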